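/- Let Δ be a pure (d-1)-dimensional simplicial complex on n vertices. If Δ satisfies Serre's condition S_r, then Δ is CM_{d-r}. -/

import Mathlib

open Finset

/-! # Abstract simplicial complexes on vertex set `Fin n` -/

/-- A (nonempty) abstract simplicial complex on vertex set `Fin n`:
a collection of finite subsets containing `∅` and closed under taking subsets. -/
def IsComplex {n : ℕ} (Δ : Set (Finset (Fin n))) : Prop :=
  ∅ ∈ Δ ∧ ∀ F ∈ Δ, ∀ G ⊆ F, G ∈ Δ

/-- The link of a face `F`. -/
def link {n : ℕ} (Δ : Set (Finset (Fin n))) (F : Finset (Fin n)) : Set (Finset (Fin n)) :=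
  {G | Disjoint F G ∧ F ∪ G ∈ Δ}

/-- The dimension of a simplicial complex, as an integer (`-1` for the void/empty complex). -/
noncomputable def dimC {n : ℕ} (Δ : Set (Finset (Fin n))) : ℤ :=
  sSup ((fun F : Finset (Fin n) => (F.card : ℤ) - 1) '' Δ)

/-- `Δ` is pure with all facets of cardinality `d` (i.e. pure of dimension `d-1`):
there is a face of cardinality `d` and every face is contained in one. -/
def IsPure {n : ℕ} (Δ : Set (Finset (Fin n))) (d : ℕ) : Prop :=
  (∃ F ∈ Δ, F.card = d) ∧ ∀ F ∈ Δ, ∃ G ∈ Δ, F ⊆ G ∧ G.card = d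

/-- The Alexander dual `Δ^∨ = {F : [n] \ F ∉ Δ}`. -/
def dualC {n : ℕ} (Δ : Set (Finset (Fin n))) : Set (Finset (Fin n)) :=
  {F | Fᶜ ∉ Δ}

/-! ## Simplicial (reduced, augmented) chain complex and reduced homology -/

variable (K : Type) [Field K]

/-- The space of `k`-chains: formal `K`-linear combinations of faces of cardinality `k`
(`k = 0` gives the span of the empty face, playing the role of the augmentation). -/
abbrev Chains {n : ℕ} (Δ : Set (Finset (Fin n))) (k : ℕ) : Type :=
  {F : Finset (Fin n) // F ∈ Δ ∧ F.card = k} →₀ K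

/-- The boundary of a single face of cardinality `k+1`. -/
noncomputable def boundaryElt {n : ℕ} (Δ : Set (Finset (Fin n))) (k : ℕ)
    (F : {F : Finset (Fin n) // F ∈ Δ ∧ F.card = k + 1}) : Chains K Δ k :=
  ∑ v ∈ F.1.attach, open Classical in if h : F.1.erase v.1 ∈ Δ then
      ((-1 : K) ^ (F.1.filter (fun w => w < v.1)).card) •
        Finsupp.single ⟨F.1.erase v.1,
          ⟨h, by simp [Finset.card_erase_of_mem v.2, F.2.2]⟩⟩ 1
    else 0

/-- The simplicial boundary map from `(k+1)`-chains to `k`-chains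
(for `k = 0` this is the augmentation map). -/
noncomputable def boundaryMap {n : ℕ} (Δ : Set (Finset (Fin n))) (k : ℕ) :
    Chains K Δ (k + 1) →ₗ[K] Chains K Δ k :=
  Finsupp.lsum K fun F => LinearMap.toSpanSingleton K _ (boundaryElt K Δ k F)

/-- Vanishing of the `i`-th reduced simplicial homology of `Δ` with coefficients in `K`
(`i : ℤ`; for `i ≤ -2` the homology is trivially zero, `i = -1` concerns the augmentation). -/
noncomputable def ReducedHomologyZero {n : ℕ} (Δ : Set (Finset (Fin n))) (i : ℤ) : Prop :=
  if i ≤ -2 then True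
  else if i = -1 then Function.Surjective (boundaryMap K Δ 0)
  else LinearMap.ker (boundaryMap K Δ i.toNat) ≤ LinearMap.range (boundaryMap K Δ (i.toNat + 1))

/-! ## Cohen–Macaulay complexes (Reisner's criterion) and relatives -/

/-- `Δ` is Cohen–Macaulay over `K` (by Reisner's criterion). -/
noncomputable def IsCMComplex {n : ℕ} (Δ : Set (Finset (Fin n))) : Prop :=
  IsComplex Δ ∧ ∀ F ∈ Δ, ∀ i : ℤ, i < dimC (link Δ F) → ReducedHomologyZero K (link Δ F) i

/-- `Δ` is `CMₜ` over `K` with facets of cardinality `d`: it is pure and the link of every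
face of cardinality at least `t` is Cohen–Macaulay. -/
noncomputable def IsCMt {n : ℕ} (Δ : Set (Finset (Fin n))) (d t : ℕ) : Prop :=
  IsComplex Δ ∧ IsPure Δ d ∧ ∀ F ∈ Δ, t ≤ F.card → IsCMComplex K (link Δ F)

/-- `Δ` is Buchsbaum over `K` with facets of cardinality `d`: pure, and
`H̃ᵢ(link F; K) = 0` for every nonempty face `F` and `i < dim link F`. -/
noncomputable def IsBuchsbaum {n : ℕ} (Δ : Set (Finset (Fin n))) (d : ℕ) : Prop :=
  IsComplex Δ ∧ IsPure Δ d ∧ ∀ F ∈ Δ, F ≠ ∅ →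
    ∀ i : ℤ, i < dimC (link Δ F) → ReducedHomologyZero K (link Δ F) i

/-- Serre's condition `S_r`: `H̃ᵢ(link F; K) = 0` for all faces `F` and all
`i < min (r-1) (dim link F)`. -/
noncomputable def SerreS {n : ℕ} (Δ : Set (Finset (Fin n))) (r : ℤ) : Prop :=
  ∀ F ∈ Δ, ∀ i : ℤ, i < min (r - 1) (dimC (link Δ F)) → ReducedHomologyZero K (link Δ F) i
/-! ## Polynomial rings, Stanley–Reisner ideals, graded Betti numbers, depth -/

/-- The polynomial ring `K[x_1,…,x_n]`. -/
abbrev PolyR (K : Type) [Field K] (n : ℕ) := MvPolynomial (Fin n) K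

/-- The Stanley–Reisner ideal `I_Δ`, generated by the monomials supported on non-faces. -/
noncomputable def srIdeal {n : ℕ} (Δ : Set (Finset (Fin n))) : Ideal (PolyR K n) :=
  Ideal.span ((fun F : Finset (Fin n) => ∏ i ∈ F, MvPolynomial.X i) '' {F | F ∉ Δ})

section Koszul

variable (n : ℕ) (M : Type) [AddCommGroup M] [Module (PolyR K n) M]
  [Module K M] [IsScalarTower K (PolyR K n) M]

/-- The `i`-th term `M ⊗ Λⁱ(Kⁿ)` of the Koszul complex of `x_1,…,x_n` with values in `M`,
realized as finitely supported families indexed by `i`-subsets of `[n]`. -/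
abbrev KChains (i : ℕ) : Type := {S : Finset (Fin n) // S.card = i} →₀ M

/-- Multiplication by the variable `x_v`, as a `K`-linear endomorphism of `M`. -/
noncomputable def smulX (v : Fin n) : M →ₗ[K] M where
  toFun m := (MvPolynomial.X v : PolyR K n) • m
  map_add' a b := smul_add _ a b
  map_smul' c m := smul_comm (MvPolynomial.X v : PolyR K n) c m

/-- Koszul differential on a basis element. -/
noncomputable def kdElt (i : ℕ) (S : {S : Finset (Fin n) // S.card = i + 1}) :
    M →ₗ[K] KChains n M i :=
  ∑ v ∈ S.1.attach, ((-1 : K) ^ ((S.1.filter (fun w => w < v.1)).card)) •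
    ((Finsupp.lsingle (M := M) ⟨S.1.erase v.1, by
        simp [Finset.card_erase_of_mem v.2, S.2]⟩).comp (smulX K n M v.1))

/-- The Koszul differential `M ⊗ Λ^{i+1} → M ⊗ Λ^i` for the sequence `x_1,…,x_n`. -/
noncomputable def kd (i : ℕ) : KChains n M (i + 1) →ₗ[K] KChains n M i :=
  Finsupp.lsum K fun S => kdElt K n M i S

/-- The Koszul differential leaving homological degree `i` (the zero map for `i = 0`). -/
noncomputable def kdOut : ∀ i : ℕ, KChains n M i →ₗ[K] KChains n M (i - 1)
  | 0 => 0
  | (i + 1) => kd K n M i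

/-- The internal-degree-`j` part of the `i`-th Koszul chain module, with respect to a
grading `g` of `M` by `K`-subspaces (`e_S ⊗ m` has degree `|S| + deg m`). -/
def KCdeg (g : ℤ → Submodule K M) (i : ℕ) (j : ℤ) : Submodule K (KChains n M i) where
  carrier := {f | ∀ S, f S ∈ g (j - i)}
  add_mem' := fun hf hg S => by
    rw [Finsupp.add_apply]; exact add_mem (hf S) (hg S)
  zero_mem' := fun S => by rw [Finsupp.zero_apply]; exact zero_mem _
  smul_mem' := fun c f hf S => by
    rw [Finsupp.smul_apply]; exact Submodule.smul_mem _ c (hf S)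

/-- Vanishing of the graded Betti number `β_{i,j}(M) = dim_K Tor_i(M,K)_j`, expressed via
the Koszul complex of `x_1,…,x_n`: every internal-degree-`j` cycle in homological degree `i`
is a boundary. -/
noncomputable def BettiZero (g : ℤ → Submodule K M) (i : ℕ) (j : ℤ) : Prop :=
  ∀ f ∈ KCdeg K n M g i j, kdOut K n M i f = 0 → f ∈ LinearMap.range (kd K n M i)

end Koszul

/-- The grading of a homogeneous ideal `I ⊆ K[x_1,…,x_n]` by `K`-subspaces. -/
noncomputable def idealGrading {n : ℕ} (I : Ideal (PolyR K n)) (j : ℤ) : Submodule K ↥I :=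
  Submodule.comap ((Submodule.subtype I).restrictScalars K)
    (if 0 ≤ j then Submodule.restrictScalars K
        (MvPolynomial.homogeneousSubmodule (Fin n) K j.toNat) else ⊥)

/-- The grading of the quotient `K[x_1,…,x_n]/I` by a homogeneous ideal. -/
noncomputable def quotGrading {n : ℕ} (I : Ideal (PolyR K n)) (j : ℤ) :
    Submodule K (PolyR K n ⧸ I) :=
  Submodule.map ((Submodule.mkQ I).restrictScalars K)
    (if 0 ≤ j then Submodule.restrictScalars K
        (MvPolynomial.homogeneousSubmodule (Fin n) K j.toNat) else ⊥)

/-- The Green–Lazarsfeld property `N_{e,p}` for a homogeneous ideal `I`: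
`I` is generated in degree `e` and `β_{i,j}(I) = 0` for all `i < p` and `j ≠ i + e`. -/
noncomputable def PropertyN {n : ℕ} (I : Ideal (PolyR K n)) (e : ℕ) (p : ℤ) : Prop :=
  I = Ideal.span {f | f ∈ I ∧ MvPolynomial.IsHomogeneous f e} ∧
  ∀ (i : ℕ) (j : ℤ), (i : ℤ) < p → j ≠ (i : ℤ) + e →
    BettiZero K n ↥I (idealGrading K I) i j

/-- The graded maximal ideal `(x_1,…,x_n)`. -/
noncomputable def maxIdeal (n : ℕ) : Ideal (PolyR K n) :=
  Ideal.span (Set.range MvPolynomial.X)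

/-- `depth M ≥ k`: there exists an `M`-regular sequence of length at least `k` inside
the graded maximal ideal `(x_1,…,x_n)`. -/
noncomputable def DepthGE {n : ℕ} (M : Type) [AddCommGroup M] [Module (PolyR K n) M]
    (k : ℤ) : Prop :=
  ∃ rs : List (PolyR K n), k ≤ (rs.length : ℤ) ∧ (∀ r ∈ rs, r ∈ maxIdeal K n) ∧
    RingTheory.Sequence.IsRegular M rs

/-- The Stanley–Reisner ring `K[Δ]`. -/
abbrev SRRing {n : ℕ} (Δ : Set (Finset (Fin n))) : Type := PolyR K n ⧸ srIdeal K Δ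
/-! ## Graphs, cycles, chords, clique complexes, f-vectors -/

/-- The clique complex of a graph: faces are the (finite) cliques. -/
def cliqueComplexC {V : Type} (G : SimpleGraph V) : Set (Finset V) :=
  {F | G.IsClique ↑F}

/-- The 1-skeleton of a simplicial complex, as a simple graph. -/
def oneSkeleton {n : ℕ} (Δ : Set (Finset (Fin n))) : SimpleGraph (Fin n) where
  Adj a b := a ≠ b ∧ ({a, b} : Finset (Fin n)) ∈ Δ
  symm := ⟨fun a b h => ⟨h.1.symm, by rw [Finset.pair_comm]; exact h.2⟩⟩
  loopless := ⟨fun a h => h.1 rfl⟩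

/-- A cycle (walk) has a chord: an edge of `G` joining two vertices of the cycle
which is not an edge of the cycle. -/
def HasChord {V : Type} {G : SimpleGraph V} {v : V} (c : G.Walk v v) : Prop :=
  ∃ a b, a ∈ c.support ∧ b ∈ c.support ∧ G.Adj a b ∧ s(a, b) ∉ c.edges

/-- Every cycle of `G` of length at most `r` (and at least `4`, so that a chord can exist)
has a chord. -/
def ChordalUpTo {V : Type} (G : SimpleGraph V) (r : ℕ) : Prop :=
  ∀ ⦃v : V⦄ (c : G.Walk v v), c.IsCycle → 4 ≤ c.length → c.length ≤ r → HasChord c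

/-- `G` is chordal: every cycle of length at least 4 has a chord. -/
def IsChordalGraph {V : Type} (G : SimpleGraph V) : Prop :=
  ∀ ⦃v : V⦄ (c : G.Walk v v), c.IsCycle → 4 ≤ c.length → HasChord c

/-- `G` is bipartite. -/
def IsBipartite {V : Type} (G : SimpleGraph V) : Prop :=
  ∃ f : V → Bool, ∀ a b, G.Adj a b → f a ≠ f b

/-- The cycle graph on `m` vertices. -/
def cycleGraph (m : ℕ) : SimpleGraph (Fin m) where
  Adj a b := a ≠ b ∧ ((a.val + 1) % m = b.val ∨ (b.val + 1) % m = a.val)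
  symm := ⟨fun a b h => ⟨h.1.symm, h.2.symm⟩⟩
  loopless := ⟨fun a h => h.1 rfl⟩

/-- The edge ideal `I(G)` of a graph on `[n]`. -/
noncomputable def edgeIdeal {n : ℕ} (G : SimpleGraph (Fin n)) : Ideal (PolyR K n) :=
  Ideal.span {f | ∃ a b, G.Adj a b ∧ f = MvPolynomial.X a * MvPolynomial.X b}

/-- A homogeneous ideal generated in degree `e` has a linear resolution:
`β_{i,j} = 0` whenever `j ≠ i + e`. -/
noncomputable def HasLinearResolution {n : ℕ} (I : Ideal (PolyR K n)) (e : ℕ) : Prop :=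
  I = Ideal.span {f | f ∈ I ∧ MvPolynomial.IsHomogeneous f e} ∧
  ∀ (i : ℕ) (j : ℤ), j ≠ (i : ℤ) + e → BettiZero K n ↥I (idealGrading K I) i j

/-- The number of faces of `Δ` of cardinality `k` (so `faceCount Δ k = f_{k-1}`). -/
noncomputable def faceCount {n : ℕ} (Δ : Set (Finset (Fin n))) (k : ℕ) : ℕ :=
  Set.ncard {F | F ∈ Δ ∧ F.card = k}

/-- The set of facets (maximal faces) of `Δ`. -/
def facetSet {n : ℕ} (Δ : Set (Finset (Fin n))) : Set (Finset (Fin n)) :=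
  {F | F ∈ Δ ∧ ∀ G ∈ Δ, F ⊆ G → F = G}

/-- The complex on the vertices of the `r`-cycle whose facets are the complements
`V(C) \ {i, j}` of the non-adjacent (non-consecutive) pairs of vertices of the cycle. -/
def GammaC (r : ℕ) : Set (Finset (Fin r)) :=
  {G | ∃ i j : Fin r, i ≠ j ∧ ¬ (cycleGraph r).Adj i j ∧ G ⊆ ({i, j} : Finset (Fin r))ᶜ}

/-!
The link of `G` in `link Δ F` is `link Δ (F ∪ G)`, and by purity
`dim link (F ∪ G) ≤ d - |F ∪ G| - 1 ≤ r - 1` once `|F| ≥ d - r`. So every vanishing of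
`H̃ᵢ(link (F ∪ G))` that Reisner's criterion asks of `link F` is one already granted by `S_r`.
-/

section Link

variable {n : ℕ} {Δ : Set (Finset (Fin n))}

lemma link_isComplex (hc : IsComplex Δ) {F : Finset (Fin n)} (hF : F ∈ Δ) :
    IsComplex (link Δ F) :=
  ⟨⟨disjoint_empty_right F, by simpa using hF⟩, fun _ ⟨hd, hu⟩ _ hsub =>
    ⟨hd.mono_right hsub, hc.2 _ hu _ (union_subset_union_right hsub)⟩⟩

lemma link_link {F G : Finset (Fin n)} (hG : G ∈ link Δ F) :
    link (link Δ F) G = link Δ (F ∪ G) := by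
  ext H
  simp only [link, Set.mem_ofPred_eq, disjoint_union_left, disjoint_union_right, union_assoc]
  constructor
  · rintro ⟨hGH, ⟨-, hFH⟩, hmem⟩
    exact ⟨⟨hFH, hGH⟩, hmem⟩
  · rintro ⟨⟨hFH, hGH⟩, hmem⟩
    exact ⟨hGH, ⟨hG.1, hFH⟩, hmem⟩

lemma dimC_link_le {d : ℕ} (hp : IsPure Δ d) {F : Finset (Fin n)} (hF : F ∈ Δ) :
    dimC (link Δ F) ≤ (d : ℤ) - F.card - 1 := by
  refine csSup_le ⟨-1, ∅, ⟨disjoint_empty_right F, by simpa using hF⟩, by simp⟩ ?_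
  rintro _ ⟨H, ⟨hd, hu⟩, rfl⟩
  obtain ⟨G, -, hsub, hcard⟩ := hp.2 _ hu
  have : F.card + H.card ≤ d := by
    rw [← card_union_of_disjoint hd, ← hcard]
    exact card_le_card hsub
  dsimp only
  omega

end Link

/-- A pure `(d-1)`-dimensional complex satisfying Serre's condition `S_r` is `CM_{d-r}`. -/
theorem serre_implies_CMt (K : Type) [Field K] {n d : ℕ}
    (Δ : Set (Finset (Fin n))) (hc : IsComplex Δ) (hp : IsPure Δ d) (r : ℕ)
    (hS : SerreS K Δ (r : ℤ)) :
    IsCMt K Δ d (d - r) := by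
  refine ⟨hc, hp, fun F hF hcard => ⟨link_isComplex hc hF, fun G hG i hi => ?_⟩⟩
  rw [link_link hG] at hi ⊢
  have hFG : F ∪ G ∈ Δ := hG.2
  refine hS _ hFG i (lt_min ?_ hi)
  have hdim := dimC_link_le hp hFG
  have hF_le : F.card ≤ (F ∪ G).card := card_le_card subset_union_left
  omega
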